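/- Let T = (V, E) be an infinite, locally finite tree with a distinguished root vertex o, and let L ≥ 1 be an integer. Suppose T satisfies condition (C1) with constant L and condition (C2) with constant L. Then for every finite nonempty set K ⊆ V that is connected in T, one has 9L² · |∂K| ≥ |K|_D, where |K|_D is the sum over v ∈ K of the degree of v in T. Equivalently, the edge-expansion constant Φ_E(T) := inf{|∂K| / |K|_D : K ⊆ V finite, nonempty, connected} satisfies Φ_E(T) ≥ 1/(9L²). -/

import Mathlib

open SimpleGraph

variable {V : Type*}

/-- Reachability within a set `s`: there is a walk from `a` to `b` all of whose
vertices lie in `s` (i.e. reachability in the induced subgraph on `s`). -/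
def ReachableWithin (G : SimpleGraph V) (s : Set V) : V → V → Prop :=
  Relation.ReflTransGen (fun x y => G.Adj x y ∧ x ∈ s ∧ y ∈ s)

/-- The connected component of `u` in the subgraph of `G` induced on `s`. -/
def componentIn (G : SimpleGraph V) (s : Set V) (u : V) : Set V :=
  {w | w ∈ s ∧ ReachableWithin G s u w}

/-- The backbone of `G` relative to the vertex set `s`, rooted at `o`: vertices lying on
an infinite injective path starting at `o` all of whose vertices are in `s`. -/
def BackboneIn (G : SimpleGraph V) (s : Set V) (o : V) : Set V :=
  {v | ∃ f : ℕ → V, f 0 = o ∧ Function.Injective f ∧ (∀ n, f n ∈ s) ∧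
    (∀ n, G.Adj (f n) (f (n + 1))) ∧ ∃ k, f k = v}

/-- The backbone `T_r` of `G` rooted at `o`: vertices lying on an infinite injective
path starting at the root `o`. -/
def Backbone (G : SimpleGraph V) (o : V) : Set V :=
  BackboneIn G Set.univ o

/-- The edge boundary of a vertex set `S`: edges of `G` with exactly one endpoint in `S`. -/
def edgeBdry (G : SimpleGraph V) (S : Set V) : Set (Sym2 V) :=
  {e | ∃ a b : V, G.Adj a b ∧ e = s(a, b) ∧ a ∈ S ∧ b ∉ S}

/-- The degree of `u` in the subgraph of `G` induced on `s`. -/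
noncomputable def degIn (G : SimpleGraph V) (s : Set V) (u : V) : ℕ :=
  (G.neighborSet u ∩ s).ncard

/-- Condition (C1) with constant `M`: for every vertex `v`, every connected component of
the subgraph induced on `(V \ T_r) ∪ {v}` has at most `M` vertices. -/
def CondC1 (G : SimpleGraph V) (o : V) (M : ℕ) : Prop :=
  ∀ v u : V, u ∈ (Backbone G o)ᶜ ∪ {v} →
    (componentIn G ((Backbone G o)ᶜ ∪ {v}) u).ncard ≤ M

/-- Condition (C2) with constant `M`: there is no path `u 0, u 1, …, u M` in the subgraph
induced on the backbone `T_r` all of whose vertices have degree `2` in that subgraph. -/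
def CondC2 (G : SimpleGraph V) (o : V) (M : ℕ) : Prop :=
  ¬ ∃ u : ℕ → V, (∀ j, j ≤ M → u j ∈ Backbone G o) ∧
    (∀ j, j < M → G.Adj (u j) (u (j + 1))) ∧
    (∀ j k, j ≤ M → k ≤ M → u j = u k → j = k) ∧
    (∀ j, j ≤ M → degIn G (Backbone G o) (u j) = 2)

/-- Non-amenability: the edge boundary of every finite nonempty vertex set is at least a
fixed positive proportion of its size. -/
def NonAmenable (G : SimpleGraph V) : Prop :=
  ∃ c : ℝ, 0 < c ∧ ∀ S : Set V, S.Finite → S.Nonempty →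
    c * (S.ncard : ℝ) ≤ ((edgeBdry G S).ncard : ℝ)

/-- `K` is connected in `G`: any two vertices of `K` are joined by a walk inside `K`. -/
def ConnectedIn (G : SimpleGraph V) (K : Set V) : Prop :=
  ∀ a ∈ K, ∀ b ∈ K, ReachableWithin G K a b

/-- `|K|_D`: the sum over the vertices of the finite set `K` of their degrees in `G`. -/
noncomputable def degSumF (G : SimpleGraph V) (K : Finset V) : ℕ :=
  ∑ v ∈ K, (G.neighborSet v).ncard

/-- The edge-expansion constant `Φ_E(G)`. -/
noncomputable def expConst (G : SimpleGraph V) : ℝ :=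
  sInf {x : ℝ | ∃ K : Finset V, K.Nonempty ∧ ConnectedIn G ↑K ∧
    x = ((edgeBdry G ↑K).ncard : ℝ) / (degSumF G K : ℝ)}

/-!
Write `β = |∂K|`. As `K` spans a subtree, `|K|_D = 2|K| - 2 + β`, so it suffices to show
`|K| ≤ 2L(L+1)β`.

Kőnig's lemma makes the components of `V \ T_r` finite, so by (C1) every vertex of `K` lies in
a component of size at most `L` hanging off a vertex of `B = K ∩ T_r`; hence `|K| ≤ L|B|`
(and `|K| ≤ L` if `B` is empty). The set `B` spans a subtree of `T_r`. Let `D ⊆ B` consist of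
the *bare* vertices, of `T_r`-degree `2` and with no `T_r`-neighbour outside `B`, and let
`S = B \ D`. By (C2) the components of `D` are paths with at most `L` vertices, each joined to
`S` by two edges, so `|D| ≤ L|S|`. As every vertex of `T_r` other than `o` has `T_r`-degree at
least `2`, counting `T_r`-degrees over `B` gives `|S| ≤ 2 e(B, T_r \ B) ≤ 2β`.
-/

namespace ReachableWithin

variable {G : SimpleGraph V} {s t : Set V} {a b : V}

lemma symm (h : ReachableWithin G s a b) : ReachableWithin G s b a := by
  induction h with
  | refl => exact .refl
  | tail _ h ih => exact .head ⟨h.1.symm, h.2.2, h.2.1⟩ ih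

lemma mono (hst : s ⊆ t) (h : ReachableWithin G s a b) : ReachableWithin G t a b := by
  induction h with
  | refl => exact .refl
  | tail _ h ih => exact ih.tail ⟨h.1, hst h.2.1, hst h.2.2⟩

lemma mem_of_mem (ha : a ∈ s) (h : ReachableWithin G s a b) : b ∈ s := by
  induction h with
  | refl => exact ha
  | tail _ h _ => exact h.2.2

lemma exists_walk (ha : a ∈ s) (h : ReachableWithin G s a b) :
    ∃ p : G.Walk a b, ∀ x ∈ p.support, x ∈ s := by
  induction h with
  | refl => exact ⟨.nil, by simpa⟩
  | tail _ h ih =>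
    obtain ⟨p, hp⟩ := ih
    refine ⟨p.concat h.1, fun x hx => ?_⟩
    rw [Walk.support_concat, List.mem_append, List.mem_singleton] at hx
    rcases hx with hx | rfl
    · exact hp x hx
    · exact h.2.2

end ReachableWithin

section Basic

variable {G : SimpleGraph V} {s : Set V}

lemma reachableWithin_of_walk {a b : V} (p : G.Walk a b) (hp : ∀ x ∈ p.support, x ∈ s) :
    ReachableWithin G s a b := by
  induction p with
  | nil => exact .refl
  | cons h q ih =>
    simp only [Walk.support_cons, List.mem_cons, forall_eq_or_imp] at hp
    exact .head ⟨h, hp.1, hp.2 _ q.start_mem_support⟩ (ih hp.2)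

lemma connectedIn_componentIn {u : V} : ConnectedIn G (componentIn G s u) := by
  have key : ∀ {a b}, a ∈ componentIn G s u → ReachableWithin G s a b →
      ReachableWithin G (componentIn G s u) a b := by
    intro a b ha h
    induction h with
    | refl => exact .refl
    | tail hreach h ih =>
      have hc : _ ∈ componentIn G s u := ⟨h.2.1, ha.2.trans hreach⟩
      exact ih.tail ⟨h.1, hc, h.2.2, hc.2.tail h⟩
  intro a ha b hb
  exact key ha (ha.2.symm.trans hb.2)

/-- A finite connected vertex set of an acyclic graph spans a tree, which has one edge less than
it has vertices. -/
lemma sum_ncard_neighborSet_inter_eq (hac : G.IsAcyclic) {A : Finset V} (hA : A.Nonempty)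
    (hconn : ConnectedIn G ↑A) :
    ∑ v ∈ A, (G.neighborSet v ∩ ↑A).ncard = 2 * (A.card - 1) := by
  classical
  set H := G.induce (↑A : Set V)
  have htree : H.IsTree := by
    refine ⟨(connected_iff _).2 ⟨fun x y => ?_, ⟨⟨_, hA.choose_spec⟩⟩⟩, hac.induce _⟩
    obtain ⟨p, hp⟩ := (hconn x x.2 y y.2).exists_walk x.2
    exact ⟨p.induce _ hp⟩
  have hdeg : ∀ v : ↥(↑A : Set V), H.degree v = (G.neighborSet v ∩ ↑A).ncard := by
    intro v
    have himg : Subtype.val '' H.neighborSet v = G.neighborSet v ∩ ↑A := by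
      ext x
      simp only [Set.mem_image, mem_neighborSet, Set.mem_inter_iff]
      constructor
      · rintro ⟨y, hy, rfl⟩
        exact ⟨hy, y.2⟩
      · rintro ⟨hadj, hx⟩
        exact ⟨⟨x, hx⟩, hadj, rfl⟩
    rw [← himg, Set.ncard_image_of_injective _ Subtype.val_injective, ← card_neighborSet_eq_degree,
      ← Nat.card_coe_set_eq, Nat.card_eq_fintype_card]
  have hcard : Fintype.card ↥(↑A : Set V) = A.card := by
    rw [← Nat.card_eq_fintype_card, Nat.card_coe_set_eq, Set.ncard_coe_finset]
  have hedges := htree.card_edgeFinset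
  calc ∑ v ∈ A, (G.neighborSet v ∩ ↑A).ncard
      = ∑ v : ↥(↑A : Set V), H.degree v := by
        rw [← Finset.sum_coe_sort A]
        exact Finset.sum_congr rfl fun v _ => (hdeg v).symm
    _ = 2 * (A.card - 1) := by rw [sum_degrees_eq_twice_card_edges]; omega

end Basic

section Boundary

variable {G : SimpleGraph V}

lemma ncard_edgeBdry (hlf : ∀ v : V, (G.neighborSet v).Finite) (K : Finset V) :
    (edgeBdry G ↑K).ncard = ∑ v ∈ K, (G.neighborSet v \ ↑K).ncard := by
  classical
  set out : V → Finset V := fun a => ((hlf a).sdiff (t := ↑K)).toFinset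
  have hbdry : edgeBdry G ↑K = ↑((K.sigma out).image fun x => s(x.1, x.2)) := by
    ext e
    simp only [edgeBdry, out, Set.mem_ofPred_eq, Finset.coe_image, Set.mem_image, Finset.mem_coe,
      Finset.mem_sigma, Set.Finite.mem_toFinset, Set.mem_sdiff, mem_neighborSet]
    constructor
    · rintro ⟨a, b, hab, rfl, ha, hb⟩
      exact ⟨⟨a, b⟩, ⟨ha, hab, hb⟩, rfl⟩
    · rintro ⟨⟨a, b⟩, ⟨ha, hab, hb⟩, rfl⟩
      exact ⟨a, b, hab, rfl, ha, hb⟩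
  have hinj : Set.InjOn (fun x : (_ : V) × V => s(x.1, x.2)) ↑(K.sigma out) := by
    rintro ⟨a, b⟩ hab ⟨c, d⟩ hcd h
    simp only [out, Finset.coe_sigma, Set.mem_sigma_iff, Finset.mem_coe, Set.Finite.mem_toFinset,
      Set.mem_sdiff] at hab hcd
    rcases Sym2.eq_iff.1 h with ⟨rfl, rfl⟩ | ⟨rfl, rfl⟩
    · rfl
    · exact absurd hab.1 hcd.2.2
  rw [hbdry, Set.ncard_coe_finset, Finset.card_image_of_injOn hinj, Finset.card_sigma]
  exact Finset.sum_congr rfl fun a _ => (Set.ncard_eq_toFinset_card _ _).symm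

/-- Handshake: the degrees in `K` count each inner edge twice and each boundary edge once. -/
lemma degSumF_add_two (hac : G.IsAcyclic) (hlf : ∀ v : V, (G.neighborSet v).Finite)
    {K : Finset V} (hK : K.Nonempty) (hconn : ConnectedIn G ↑K) :
    degSumF G K + 2 = 2 * K.card + (edgeBdry G ↑K).ncard := by
  have hsplit : ∀ v ∈ K, (G.neighborSet v).ncard
      = (G.neighborSet v ∩ ↑K).ncard + (G.neighborSet v \ ↑K).ncard :=
    fun v _ => (Set.ncard_inter_add_ncard_sdiff_eq_ncard _ _ (hlf v)).symm
  rw [degSumF, Finset.sum_congr rfl hsplit, Finset.sum_add_distrib,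
    sum_ncard_neighborSet_inter_eq hac hK hconn, ncard_edgeBdry hlf]
  have := hK.card_pos
  omega

lemma one_le_ncard_edgeBdry [Infinite V] (hconn : G.Connected)
    (hlf : ∀ v : V, (G.neighborSet v).Finite) {K : Finset V} (hK : K.Nonempty) :
    1 ≤ (edgeBdry G ↑K).ncard := by
  obtain ⟨a, ha⟩ := hK
  obtain ⟨x, hx⟩ := Infinite.exists_notMem_finset K
  obtain ⟨d, -, hd, hd'⟩ := (hconn.preconnected a x).some.exists_boundary_dart ↑K ha hx
  rw [ncard_edgeBdry hlf]
  calc 1 ≤ (G.neighborSet d.fst \ ↑K).ncard :=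
        (Set.ncard_pos (hlf _).sdiff).2 ⟨d.snd, d.adj, hd'⟩
    _ ≤ ∑ v ∈ K, (G.neighborSet v \ ↑K).ncard :=
        Finset.single_le_sum (f := fun v => (G.neighborSet v \ ↑K).ncard)
          (fun _ _ => Nat.zero_le _) hd

end Boundary

section Backbone

variable {G : SimpleGraph V} {o : V}

lemma mem_backbone_of_ray {f : ℕ → V} (hf0 : f 0 = o) (hinj : Function.Injective f)
    (hadj : ∀ n, G.Adj (f n) (f (n + 1))) (i : ℕ) : f i ∈ Backbone G o :=
  ⟨f, hf0, hinj, fun _ => Set.mem_univ _, hadj, i, rfl⟩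

lemma exists_walk_support_subset_range {f : ℕ → V} (hadj : ∀ n, G.Adj (f n) (f (n + 1)))
    (k : ℕ) : ∃ p : G.Walk (f 0) (f k), ∀ x ∈ p.support, ∃ i, f i = x := by
  induction k with
  | zero => exact ⟨.nil, by simp⟩
  | succ k ih =>
    obtain ⟨p, hp⟩ := ih
    refine ⟨p.concat (hadj k), fun x hx => ?_⟩
    rw [Walk.support_concat, List.mem_append, List.mem_singleton] at hx
    rcases hx with hx | rfl
    · exact hp x hx
    · exact ⟨k + 1, rfl⟩

lemma exists_walk_support_subset_backbone {v : V} (hv : v ∈ Backbone G o) :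
    ∃ p : G.Walk o v, ∀ x ∈ p.support, x ∈ Backbone G o := by
  obtain ⟨f, rfl, hinj, -, hadj, k, rfl⟩ := hv
  obtain ⟨p, hp⟩ := exists_walk_support_subset_range hadj k
  refine ⟨p, fun x hx => ?_⟩
  obtain ⟨i, rfl⟩ := hp x hx
  exact mem_backbone_of_ray rfl hinj hadj i

lemma SimpleGraph.IsAcyclic.support_subset_of_isPath (hac : G.IsAcyclic) {a b : V}
    {q : G.Walk a b} (hq : q.IsPath) (p : G.Walk a b) : q.support ⊆ p.support := by
  classical
  have : (⟨q, hq⟩ : G.Path a b) = p.toPath := (hac.subsingleton_path a b).elim _ _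
  rw [show q = p.toPath from congrArg Subtype.val this]
  exact Walk.support_toPath_subset_support p

lemma SimpleGraph.IsAcyclic.mem_backbone_of_isPath (hac : G.IsAcyclic) {a b : V}
    (ha : a ∈ Backbone G o) (hb : b ∈ Backbone G o) {q : G.Walk a b} (hq : q.IsPath) :
    ∀ x ∈ q.support, x ∈ Backbone G o := by
  obtain ⟨pa, hpa⟩ := exists_walk_support_subset_backbone ha
  obtain ⟨pb, hpb⟩ := exists_walk_support_subset_backbone hb
  intro x hx
  rcases (Walk.mem_support_append_iff _ _).1
    (hac.support_subset_of_isPath hq (pa.reverse.append pb) hx) with hx | hx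
  · exact hpa x (by rwa [Walk.support_reverse, List.mem_reverse] at hx)
  · exact hpb x hx

lemma SimpleGraph.IsAcyclic.connectedIn_filter_mem_backbone (hac : G.IsAcyclic)
    [DecidablePred (· ∈ Backbone G o)] {K : Finset V} (hK : ConnectedIn G ↑K) :
    ConnectedIn G ↑(K.filter (· ∈ Backbone G o)) := by
  classical
  intro a ha b hb
  simp only [Finset.coe_filter, Set.mem_ofPred_eq] at ha hb
  obtain ⟨p, hp⟩ := (hK a ha.1 b hb.1).exists_walk ha.1
  have hbackbone := hac.mem_backbone_of_isPath ha.2 hb.2 p.bypass_isPath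
  refine reachableWithin_of_walk p.bypass fun x hx => ?_
  simpa using ⟨hp x (p.support_bypass_subset_support hx), hbackbone x hx⟩

lemma two_le_degIn_backbone (hlf : ∀ v : V, (G.neighborSet v).Finite) {v : V}
    (hv : v ∈ Backbone G o) (hvo : v ≠ o) : 2 ≤ degIn G (Backbone G o) v := by
  obtain ⟨f, hf0, hinj, -, hadj, _ | k, rfl⟩ := hv
  · exact absurd hf0 hvo
  refine (Set.one_lt_ncard_iff ((hlf _).subset Set.inter_subset_left)).2
    ⟨f k, f (k + 2), ⟨(hadj k).symm, mem_backbone_of_ray hf0 hinj hadj k⟩,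
      ⟨hadj (k + 1), mem_backbone_of_ray hf0 hinj hadj (k + 2)⟩, fun h => by
        have := hinj h; omega⟩

lemma one_le_degIn_backbone_root (hlf : ∀ v : V, (G.neighborSet v).Finite)
    (ho : o ∈ Backbone G o) : 1 ≤ degIn G (Backbone G o) o := by
  obtain ⟨f, hf0, hinj, -, hadj, -⟩ := ho
  refine (Set.ncard_pos ((hlf _).subset Set.inter_subset_left)).2
    ⟨f 1, ?_, mem_backbone_of_ray hf0 hinj hadj 1⟩
  rw [← hf0]
  exact hadj 0

end Backbone

section Koenig

variable {G : SimpleGraph V} {t : Set V}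

lemma ReachableWithin.exists_adj_reachableWithin_sdiff {x w : V}
    (h : ReachableWithin G t x w) (hw : w ≠ x) :
    ∃ y, G.Adj x y ∧ y ∈ t \ {x} ∧ ReachableWithin G (t \ {x}) y w := by
  induction h with
  | refl => exact absurd rfl hw
  | @tail c w _ h ih =>
    by_cases hc : c = x
    · subst hc
      exact ⟨w, h.1, ⟨h.2.2, hw⟩, .refl⟩
    · obtain ⟨y, hxy, hy, hyc⟩ := ih hc
      exact ⟨y, hxy, hy, hyc.tail ⟨h.1, ⟨h.2.1, hc⟩, ⟨h.2.2, hw⟩⟩⟩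

lemma exists_adj_infinite_componentIn_sdiff (hlf : ∀ v : V, (G.neighborSet v).Finite) {x : V}
    (hinf : (componentIn G t x).Infinite) :
    ∃ y, G.Adj x y ∧ y ∈ t \ {x} ∧ (componentIn G (t \ {x}) y).Infinite := by
  by_contra! hfin
  have hidx : {y | G.Adj x y ∧ y ∈ t \ {x}}.Finite := (hlf x).subset fun y hy => hy.1
  refine hinf (((hidx.biUnion fun y hy => hfin y hy.1 hy.2).insert x).subset ?_)
  rintro w ⟨-, hw⟩
  by_cases hwx : w = x
  · exact Or.inl hwx
  · obtain ⟨y, hxy, hy, hyw⟩ := hw.exists_adj_reachableWithin_sdiff hwx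
    exact Or.inr (Set.mem_biUnion (x := y) ⟨hxy, hy⟩ ⟨hyw.mem_of_mem hy, hyw⟩)

/-- Kőnig's lemma. The ray is built greedily: delete the current vertex and move to a neighbour
whose component in what is left is still infinite. -/
lemma exists_ray_of_infinite_componentIn (hlf : ∀ v : V, (G.neighborSet v).Finite) {u : V}
    (hu : u ∈ t) (hinf : (componentIn G t u).Infinite) :
    ∃ r : ℕ → V, r 0 = u ∧ Function.Injective r ∧ (∀ n, r n ∈ t) ∧
      ∀ n, G.Adj (r n) (r (n + 1)) := by
  let Q := {q : V × Set V // q.1 ∈ q.2 ∧ (componentIn G q.2 q.1).Infinite}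
  have hstep : ∀ q : Q, ∃ q' : Q, G.Adj q.1.1 q'.1.1 ∧ q'.1.2 = q.1.2 \ {q.1.1} := fun q =>
    let ⟨y, hxy, hy, hinf⟩ := exists_adj_infinite_componentIn_sdiff hlf q.2.2
    ⟨⟨(y, q.1.2 \ {q.1.1}), hy, hinf⟩, hxy, rfl⟩
  choose step hadj hset using hstep
  let g : ℕ → Q := fun n => step^[n] ⟨(u, t), hu, hinf⟩
  have hg : ∀ n, g (n + 1) = step (g n) := fun n => Function.iterate_succ_apply' _ _ _
  have hanti : Antitone fun n => (g n).1.2 :=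
    antitone_nat_of_succ_le fun n => by
      simp only [hg, hset]
      exact Set.sdiff_subset
  have hgone : ∀ m n, m < n → (g m).1.1 ∉ (g n).1.2 := fun m n hmn hm => by
    have := hanti (Nat.succ_le_of_lt hmn) hm
    simp only [hg, hset] at this
    exact this.2 rfl
  refine ⟨fun n => (g n).1.1, rfl, fun m n hmn => ?_, fun n => hanti (Nat.zero_le n) (g n).2.1,
    fun n => by simpa only [hg] using hadj (g n)⟩
  replace hmn : (g m).1.1 = (g n).1.1 := hmn
  by_contra hne
  rcases lt_or_gt_of_ne hne with h | h
  · exact hgone m n h (hmn ▸ (g n).2.1)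
  · exact hgone n m h (hmn ▸ (g m).2.1)

end Koenig

section ConditionC1

variable {G : SimpleGraph V} {o : V}

lemma mem_backbone_of_isPath_of_ray {r : ℕ → V} (hinj : Function.Injective r)
    (hadj : ∀ n, G.Adj (r n) (r (n + 1))) {j : ℕ} {p : G.Walk o (r j)} (hp : p.IsPath)
    (havoid : ∀ n, j < n → r n ∉ p.support) {n : ℕ} (hn : j < n) : r n ∈ Backbone G o := by
  let c := p.length
  let g : ℕ → V := fun n => if n ≤ c then p.getVert n else r (j + (n - c))
  have hg_le : ∀ n, n ≤ c → g n = p.getVert n := fun n hn => if_pos hn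
  have hg_gt : ∀ n, c < n → g n = r (j + (n - c)) := fun n hn => if_neg (by omega)
  have hginj : Function.Injective g := by
    intro a b hab
    rcases le_or_gt a c with ha | ha <;> rcases le_or_gt b c with hb | hb
    · rw [hg_le a ha, hg_le b hb] at hab
      exact hp.getVert_injOn ha hb hab
    · rw [hg_le a ha, hg_gt b hb] at hab
      exact absurd (hab ▸ p.getVert_mem_support a) (havoid _ (by omega))
    · rw [hg_gt a ha, hg_le b hb] at hab
      exact absurd (hab ▸ p.getVert_mem_support b) (havoid _ (by omega))
    · rw [hg_gt a ha, hg_gt b hb] at hab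
      have := hinj hab
      omega
  have hgadj : ∀ n, G.Adj (g n) (g (n + 1)) := by
    intro n
    rcases lt_trichotomy n c with hn | rfl | hn
    · rw [hg_le n hn.le, hg_le (n + 1) hn]
      exact p.adj_getVert_succ hn
    · rw [hg_le _ le_rfl, hg_gt _ (Nat.lt_succ_self _), Walk.getVert_length,
        show j + (p.length + 1 - p.length) = j + 1 by omega]
      exact hadj j
    · rw [hg_gt n hn, hg_gt (n + 1) (by omega), show j + (n + 1 - c) = j + (n - c) + 1 by omega]
      exact hadj _
  have : r n = g (c + (n - j)) := by
    rw [hg_gt _ (by omega)]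
    congr 1
    omega
  rw [this]
  exact mem_backbone_of_ray (by simp [g]) hginj hgadj _

/-- Follow a path from `o` to the ray, leaving it at the last vertex of the ray that it visits. -/
lemma exists_forall_mem_backbone_of_ray (hconn : G.Connected) {r : ℕ → V}
    (hinj : Function.Injective r) (hadj : ∀ n, G.Adj (r n) (r (n + 1))) :
    ∃ j, ∀ n, j < n → r n ∈ Backbone G o := by
  classical
  let q := (hconn.preconnected o (r 0)).some.bypass
  have hfin : {n | r n ∈ q.support}.Finite := q.support.finite_toSet.preimage hinj.injOn
  obtain ⟨j, hj, hjmax⟩ := hfin.exists_maximalFor id _ ⟨0, q.end_mem_support⟩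
  refine ⟨j, fun n hn => mem_backbone_of_isPath_of_ray hinj hadj
    (Walk.bypass_isPath _ |>.takeUntil hj) (fun n hn h => ?_) hn⟩
  have := hjmax (q.support_takeUntil_subset_support hj h) hn.le
  simp only [id] at this
  omega

lemma finite_componentIn_compl_backbone (hconn : G.Connected)
    (hlf : ∀ v : V, (G.neighborSet v).Finite) (v : V) :
    (componentIn G ((Backbone G o)ᶜ ∪ {v}) v).Finite := by
  by_contra hinf
  obtain ⟨r, -, hinj, hr, hadj⟩ :=
    exists_ray_of_infinite_componentIn hlf (Or.inr rfl) hinf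
  obtain ⟨j, hj⟩ := exists_forall_mem_backbone_of_ray (o := o) hconn hinj hadj
  have hv : ∀ n, j < n → r n = v := fun n hn => (hr n).resolve_left fun h => h (hj n hn)
  have := hinj ((hv (j + 1) (by omega)).trans (hv (j + 2) (by omega)).symm)
  omega

variable {L : ℕ}

lemma card_le_of_subset_componentIn (hconn : G.Connected)
    (hlf : ∀ v : V, (G.neighborSet v).Finite) (hC1 : CondC1 G o L) {K : Finset V} {v : V}
    (hK : ↑K ⊆ componentIn G ((Backbone G o)ᶜ ∪ {v}) v) : K.card ≤ L := by
  rw [← Set.ncard_coe_finset]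
  exact (Set.ncard_le_ncard hK (finite_componentIn_compl_backbone hconn hlf v)).trans
    (hC1 v v (Or.inr rfl))

/-- Walking inside `K` towards a backbone vertex, one stays off the backbone until the first
backbone vertex `v`, so the starting point lies in the component of `v`. -/
lemma exists_mem_backbone_mem_componentIn {K : Set V} {b w : V} (hb : b ∈ Backbone G o)
    (hbK : b ∈ K) (hw : ReachableWithin G K w b) (hwK : w ∈ K) :
    ∃ v ∈ K, v ∈ Backbone G o ∧ w ∈ componentIn G ((Backbone G o)ᶜ ∪ {v}) v := by
  induction hw using Relation.ReflTransGen.head_induction_on with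
  | refl => exact ⟨b, hbK, hb, Or.inr rfl, .refl⟩
  | @head w c hwc _ ih =>
    by_cases hwb : w ∈ Backbone G o
    · exact ⟨w, hwK, hwb, Or.inr rfl, .refl⟩
    · obtain ⟨v, hvK, hv, hc, hvc⟩ := ih hwc.2.2
      exact ⟨v, hvK, hv, Or.inl hwb, hvc.tail ⟨hwc.1.symm, hc, Or.inl hwb⟩⟩

lemma card_le_mul_card_filter_mem_backbone (hconn : G.Connected)
    (hlf : ∀ v : V, (G.neighborSet v).Finite) (hC1 : CondC1 G o L)
    [DecidablePred (· ∈ Backbone G o)] {K : Finset V} (hK : ConnectedIn G ↑K) {b : V}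
    (hbK : b ∈ K) (hb : b ∈ Backbone G o) :
    K.card ≤ L * (K.filter (· ∈ Backbone G o)).card := by
  classical
  let piece : V → Finset V := fun v => K.filter (· ∈ componentIn G ((Backbone G o)ᶜ ∪ {v}) v)
  have hcover : K ⊆ (K.filter (· ∈ Backbone G o)).biUnion piece := by
    intro w hw
    obtain ⟨v, hvK, hv, hwv⟩ := exists_mem_backbone_mem_componentIn hb hbK (hK w hw b hbK) hw
    exact Finset.mem_biUnion.2 ⟨v, Finset.mem_filter.2 ⟨hvK, hv⟩, Finset.mem_filter.2 ⟨hw, hwv⟩⟩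
  calc K.card ≤ ∑ v ∈ K.filter (· ∈ Backbone G o), (piece v).card :=
        (Finset.card_le_card hcover).trans Finset.card_biUnion_le
    _ ≤ ∑ _v ∈ K.filter (· ∈ Backbone G o), L := Finset.sum_le_sum fun v _ =>
        card_le_of_subset_componentIn hconn hlf hC1 fun x hx => (Finset.mem_filter.1 hx).2
    _ = L * (K.filter (· ∈ Backbone G o)).card := by rw [Finset.sum_const, smul_eq_mul, mul_comm]

lemma card_le_of_forall_not_mem_backbone (hconn : G.Connected)
    (hlf : ∀ v : V, (G.neighborSet v).Finite) (hC1 : CondC1 G o L) {K : Finset V}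
    (hK : ConnectedIn G ↑K) (hKB : ∀ x ∈ K, x ∉ Backbone G o) : K.card ≤ L := by
  obtain rfl | ⟨a, ha⟩ := K.eq_empty_or_nonempty
  · exact Nat.zero_le _
  refine card_le_of_subset_componentIn hconn hlf hC1 (v := a) fun w hw => ⟨Or.inl (hKB w hw), ?_⟩
  exact (hK a ha w hw).mono fun x hx => Or.inl (hKB x hx)

end ConditionC1

section BarePaths

variable {G : SimpleGraph V}

lemma ncard_neighborSet_inter_eq_card_filter [DecidableRel G.Adj] (v : V) (Y : Finset V) :
    (G.neighborSet v ∩ ↑Y).ncard = (Y.filter (G.Adj v)).card := by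
  rw [← Set.ncard_coe_finset]
  congr 1
  ext u
  simp [and_comm]

lemma sum_ncard_neighborSet_inter_comm (X Y : Finset V) :
    ∑ v ∈ X, (G.neighborSet v ∩ ↑Y).ncard = ∑ w ∈ Y, (G.neighborSet w ∩ ↑X).ncard := by
  classical
  simp only [ncard_neighborSet_inter_eq_card_filter]
  convert Finset.sum_card_bipartiteAbove_eq_sum_card_bipartiteBelow (r := G.Adj) using 3 with w
  · rfl
  · exact Finset.filter_congr fun _ _ => G.adj_comm _ _

lemma SimpleGraph.Walk.IsPath.two_lt_ncard_neighborSet_inter {s : Set V} (hs : s.Finite)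
    {a b y : V} {p : G.Walk a b} (hp : p.IsPath) (hps : ∀ x ∈ p.support, x ∈ s) {i : ℕ}
    (hi0 : i ≠ 0) (hil : i < p.length) (hy : G.Adj (p.getVert i) y) (hyp : y ∉ p.support)
    (hys : y ∈ s) : 2 < (G.neighborSet (p.getVert i) ∩ s).ncard := by
  have hprev := p.adj_getVert_succ (i := i - 1) (by omega)
  rw [Nat.sub_add_cancel (Nat.pos_of_ne_zero hi0)] at hprev
  have hne : p.getVert (i - 1) ≠ p.getVert (i + 1) := fun h => by
    have := hp.getVert_injOn (by simp only [Set.mem_ofPred_eq]; omega)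
      (by simp only [Set.mem_ofPred_eq]; omega) h
    omega
  exact (Set.two_lt_ncard_iff (hs.subset Set.inter_subset_right)).2
    ⟨_, _, _, ⟨hprev.symm, hps _ (p.getVert_mem_support _)⟩,
      ⟨p.adj_getVert_succ hil, hps _ (p.getVert_mem_support _)⟩, ⟨hy, hys⟩, hne,
      fun h => hyp (h ▸ p.getVert_mem_support _), fun h => hyp (h ▸ p.getVert_mem_support _)⟩

/-- A longest path inside `C` spans it: it cannot be extended, and none of its inner vertices has
a third neighbour in `C`. -/
lemma exists_isPath_forall_mem_support_iff {C : Finset V} (hC : C.Nonempty)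
    (hconn : ConnectedIn G ↑C) (hdeg : ∀ v ∈ C, (G.neighborSet v ∩ ↑C).ncard ≤ 2) :
    ∃ (a b : V) (p : G.Walk a b), p.IsPath ∧ ∀ x, x ∈ p.support ↔ x ∈ C := by
  classical
  let P : ℕ → Prop := fun n =>
    ∃ (a b : V) (p : G.Walk a b), p.IsPath ∧ p.support.toFinset ⊆ C ∧ p.length = n
  have hbound : ∀ n, P n → n + 1 ≤ C.card := by
    rintro n ⟨a, b, p, hp, hpC, rfl⟩
    rw [← Walk.length_support, ← List.toFinset_card_of_nodup hp.support_nodup]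
    exact Finset.card_le_card hpC
  obtain ⟨c, hc⟩ := hC
  obtain ⟨a, b, p, hp, hpC, hlen⟩ :=
    Nat.findGreatest_spec (P := P) (Nat.zero_le C.card) ⟨c, c, .nil, .nil, by simpa using hc, rfl⟩
  have hmax : ¬ P (p.length + 1) := fun h => by
    have := Nat.le_findGreatest (hbound _ h |>.trans' (Nat.le_succ _)) h
    omega
  have hsupp : ∀ {x}, x ∈ p.support → x ∈ C := fun hx => hpC (List.mem_toFinset.2 hx)
  refine ⟨a, b, p, hp, fun x => ⟨hsupp, fun hx => ?_⟩⟩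
  by_contra hxp
  have ha := hsupp p.start_mem_support
  obtain ⟨q, hq⟩ := (hconn a ha x hx).exists_walk ha
  obtain ⟨⟨⟨z, y⟩, hzy⟩, hd, hz, hy⟩ :=
    q.exists_boundary_dart {x | x ∈ p.support} p.start_mem_support hxp
  simp only [Set.mem_ofPred_eq] at hz hy
  have hyC : y ∈ C := hq _ (q.dart_snd_mem_support_of_mem_darts hd)
  have hsubset : ∀ {u}, (u = y ∨ u ∈ p.support) → u ∈ C := by
    rintro u (rfl | hu)
    exacts [hyC, hsupp hu]
  by_cases hzb : z = b
  · refine hmax ⟨a, y, p.concat (hzb ▸ hzy), hp.concat hy _, fun u hu => ?_, by simp⟩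
    simp only [List.mem_toFinset, Walk.support_concat, List.mem_append, List.mem_singleton] at hu
    exact hsubset hu.symm
  by_cases hza : z = a
  · refine hmax ⟨y, b, .cons (hza ▸ hzy.symm) p, hp.cons hy, fun u hu => ?_, by simp⟩
    simp only [List.mem_toFinset, Walk.support_cons, List.mem_cons] at hu
    exact hsubset hu
  obtain ⟨i, rfl, hil⟩ := Walk.mem_support_iff_exists_getVert.1 hz
  have h3 := hp.two_lt_ncard_neighborSet_inter C.finite_toSet (fun _ hx => hsupp hx)
    (fun h => hza (by rw [h, p.getVert_zero]))
    (lt_of_le_of_ne hil fun h => hzb (h ▸ p.getVert_length)) hzy hy hyC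
  exact absurd (hdeg _ (hsupp hz)) (by omega)

variable {o : V} {L : ℕ}

lemma card_le_of_condC2 (hC2 : CondC2 G o L) {C : Finset V} (hC : C.Nonempty)
    (hconn : ConnectedIn G ↑C) (hdeg : ∀ v ∈ C, v ∈ Backbone G o ∧ degIn G (Backbone G o) v = 2) :
    C.card ≤ L := by
  classical
  have hdegC : ∀ v ∈ C, (G.neighborSet v ∩ ↑C).ncard ≤ 2 := fun v hv => by
    obtain ⟨-, h2⟩ := hdeg v hv
    rw [degIn] at h2
    refine h2 ▸ Set.ncard_le_ncard (Set.inter_subset_inter_right _ fun x hx => (hdeg x hx).1)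
      (Set.finite_of_ncard_ne_zero (by omega))
  obtain ⟨a, b, p, hp, hpC⟩ := exists_isPath_forall_mem_support_iff hC hconn hdegC
  have hcard : C.card = p.length + 1 := by
    rw [← Walk.length_support, ← List.toFinset_card_of_nodup hp.support_nodup]
    congr 1
    ext x
    simp [hpC]
  have hmem : ∀ j, p.getVert j ∈ C := fun j => (hpC _).1 (p.getVert_mem_support j)
  by_contra! hL
  exact hC2 ⟨p.getVert, fun j _ => (hdeg _ (hmem j)).1, fun j hj => p.adj_getVert_succ (by omega),
    fun j k hj hk h => hp.getVert_injOn (by simp only [Set.mem_ofPred_eq]; omega)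
      (by simp only [Set.mem_ofPred_eq]; omega) h, fun j _ => (hdeg _ (hmem j)).2⟩

end BarePaths

section Counting

variable {G : SimpleGraph V} {R : Set V} {B : Finset V}

lemma degIn_eq_ncard_add_ncard (hlf : ∀ v : V, (G.neighborSet v).Finite) (hB : ↑B ⊆ R)
    (v : V) : degIn G R v =
      (G.neighborSet v ∩ ↑B).ncard + (G.neighborSet v ∩ (R \ ↑B)).ncard := by
  rw [degIn, ← Set.ncard_union_eq
    ((Set.disjoint_sdiff_right).mono Set.inter_subset_right Set.inter_subset_right)
    (B.finite_toSet.subset Set.inter_subset_right) ((hlf v).subset Set.inter_subset_left),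
    ← Set.inter_union_distrib_left, Set.union_sdiff_cancel hB]

lemma sum_degIn_eq (hac : G.IsAcyclic) (hlf : ∀ v : V, (G.neighborSet v).Finite)
    (hB : ↑B ⊆ R) (hBne : B.Nonempty) (hBconn : ConnectedIn G ↑B) :
    ∑ v ∈ B, degIn G R v =
      2 * (B.card - 1) + ∑ v ∈ B, (G.neighborSet v ∩ (R \ ↑B)).ncard := by
  rw [Finset.sum_congr rfl fun v _ => degIn_eq_ncard_add_ncard hlf hB v, Finset.sum_add_distrib,
    sum_ncard_neighborSet_inter_eq hac hBne hBconn]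

def IsBare (G : SimpleGraph V) (R : Set V) (B : Finset V) (v : V) : Prop :=
  degIn G R v = 2 ∧ (G.neighborSet v ∩ (R \ ↑B)).ncard = 0

noncomputable instance (G : SimpleGraph V) (R : Set V) (B : Finset V) :
    DecidablePred (IsBare G R B) :=
  fun _ => instDecidableAnd

/-- A vertex of `B` that is not bare has `R`-degree at least `3` or an `R`-neighbour outside `B`
(or is `o`); sum this over `B` against the handshake lemma. -/
lemma card_filter_not_isBare_le (hac : G.IsAcyclic) (hlf : ∀ v : V, (G.neighborSet v).Finite)
    (hB : ↑B ⊆ R) (hBne : B.Nonempty) (hBconn : ConnectedIn G ↑B) {o : V}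
    (hR2 : ∀ v ∈ R, v ≠ o → 2 ≤ degIn G R v) (hRo : o ∈ R → 1 ≤ degIn G R o) :
    (B.filter fun v => ¬ IsBare G R B v).card ≤
      2 * ∑ v ∈ B, (G.neighborSet v ∩ (R \ ↑B)).ncard := by
  classical
  have hvertex : ∀ v ∈ B, (if ¬ IsBare G R B v then 1 else 0) + 2 ≤
      degIn G R v + (G.neighborSet v ∩ (R \ ↑B)).ncard + (if o = v then 2 else 0) := by
    intro v hv
    have hdeg : 1 ≤ degIn G R v ∧ (o ≠ v → 2 ≤ degIn G R v) := by
      by_cases hvo : o = v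
      · subst hvo
        exact ⟨hRo (hB hv), fun h => absurd rfl h⟩
      · have := hR2 v (hB hv) (Ne.symm hvo)
        exact ⟨by omega, fun _ => this⟩
    by_cases hbare : IsBare G R B v
    · rw [if_neg (not_not_intro hbare)]
      have := hbare.1
      split_ifs <;> omega
    · rw [if_pos hbare]
      unfold IsBare at hbare
      split_ifs with hvo
      · omega
      · have := hdeg.2 hvo
        omega
  have hsum := Finset.sum_le_sum hvertex
  simp only [Finset.sum_add_distrib, Finset.sum_const, smul_eq_mul, Finset.sum_ite_eq] at hsum
  rw [← Finset.card_filter, sum_degIn_eq hac hlf hB hBne hBconn] at hsum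
  have := hBne.card_pos
  split_ifs at hsum <;> omega

/-- Each component of `D` has at most `L` vertices and, by the handshake lemma, exactly two edges
to `B \ D`. -/
lemma two_mul_card_le_mul_sum_ncard_neighborSet_inter (hac : G.IsAcyclic)
    (hlf : ∀ v : V, (G.neighborSet v).Finite) {L : ℕ} {D : Finset V} (hDB : D ⊆ B)
    (hdeg : ∀ v ∈ D, degIn G ↑B v = 2)
    (hsmall : ∀ C ⊆ D, C.Nonempty → ConnectedIn G ↑C → C.card ≤ L) :
    2 * D.card ≤ L * ∑ v ∈ D, (G.neighborSet v ∩ (↑B \ ↑D)).ncard := by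
  classical
  let comp : V → Finset V := fun v => D.filter (ReachableWithin G ↑D v)
  have hmem_comp : ∀ {v w}, w ∈ comp v ↔ w ∈ D ∧ ReachableWithin G ↑D v w := by
    intro v w; simp [comp]
  have hconn : ∀ v, ConnectedIn G ↑(comp v) := fun v => by
    convert connectedIn_componentIn (G := G) (s := ↑D) (u := v) using 1
    ext w
    simp [hmem_comp, componentIn]
  have hcard : ∀ v ∈ D, (comp v).card ≤ L := fun v hv =>
    hsmall _ (Finset.filter_subset _ _) ⟨v, hmem_comp.2 ⟨hv, .refl⟩⟩ (hconn v)
  have hexit : ∀ v ∈ D, ∑ w ∈ comp v, (G.neighborSet w ∩ (↑B \ ↑D)).ncard = 2 := by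
    intro v hv
    have hne : (comp v).Nonempty := ⟨v, hmem_comp.2 ⟨hv, .refl⟩⟩
    have hout : ∀ w ∈ comp v,
        G.neighborSet w ∩ (↑B \ ↑(comp v)) = G.neighborSet w ∩ (↑B \ ↑D) := by
      intro w hw
      obtain ⟨hwD, hvw⟩ := hmem_comp.1 hw
      ext x
      simp only [Set.mem_inter_iff, Set.mem_sdiff, Finset.mem_coe, hmem_comp, mem_neighborSet]
      exact ⟨fun ⟨hwx, hxB, hx⟩ => ⟨hwx, hxB, fun hxD => hx ⟨hxD, hvw.tail ⟨hwx, hwD, hxD⟩⟩⟩,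
        fun ⟨hwx, hxB, hxD⟩ => ⟨hwx, hxB, fun hx => hxD hx.1⟩⟩
    have h := sum_degIn_eq hac hlf (fun x hx => hDB (hmem_comp.1 hx).1) hne (hconn v)
    rw [Finset.sum_congr rfl fun w hw => hdeg w (hmem_comp.1 hw).1,
      Finset.sum_congr rfl fun w hw => congrArg Set.ncard (hout w hw), Finset.sum_const,
      smul_eq_mul] at h
    have := hne.card_pos
    omega
  calc 2 * D.card = ∑ v ∈ D, ∑ w ∈ comp v, (G.neighborSet w ∩ (↑B \ ↑D)).ncard := by
        rw [Finset.sum_congr rfl hexit, Finset.sum_const, smul_eq_mul, mul_comm]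
    _ = ∑ w ∈ D, ∑ _v ∈ comp w, (G.neighborSet w ∩ (↑B \ ↑D)).ncard :=
        Finset.sum_comm' fun v w => by
          simp only [hmem_comp]
          exact ⟨fun ⟨hv, hw, h⟩ => ⟨⟨hv, h.symm⟩, hw⟩, fun ⟨⟨hv, h⟩, hw⟩ => ⟨hv, hw, h.symm⟩⟩
    _ ≤ ∑ w ∈ D, L * (G.neighborSet w ∩ (↑B \ ↑D)).ncard := by
        refine Finset.sum_le_sum fun w hw => ?_
        rw [Finset.sum_const, smul_eq_mul]
        exact Nat.mul_le_mul_right _ (hcard w hw)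
    _ = L * ∑ v ∈ D, (G.neighborSet v ∩ (↑B \ ↑D)).ncard := Finset.mul_sum _ _ _ |>.symm

lemma card_filter_isBare_le (hac : G.IsAcyclic) (hlf : ∀ v : V, (G.neighborSet v).Finite)
    (hB : ↑B ⊆ R) (hBne : B.Nonempty) (hBconn : ConnectedIn G ↑B) {L : ℕ}
    (hbare : ∀ C : Finset V, C.Nonempty → ConnectedIn G ↑C →
      (∀ v ∈ C, v ∈ R ∧ degIn G R v = 2) → C.card ≤ L) :
    (B.filter (IsBare G R B)).card ≤ L * (B.filter fun v => ¬ IsBare G R B v).card := by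
  set D := B.filter (IsBare G R B)
  set S := B.filter fun v => ¬ IsBare G R B v
  have hDB : D ⊆ B := Finset.filter_subset _ _
  have hdeg : ∀ v ∈ D, (G.neighborSet v ∩ ↑B).ncard = 2 := fun v hv => by
    obtain ⟨-, h2, h0⟩ := Finset.mem_filter.1 hv
    have := degIn_eq_ncard_add_ncard hlf hB v
    omega
  have hBD : (↑B \ ↑D : Set V) = ↑S := by
    ext x
    simp only [D, S, Set.mem_sdiff, Finset.coe_filter, Finset.mem_coe, Set.mem_ofPred_eq]
    tauto
  have hDS := two_mul_card_le_mul_sum_ncard_neighborSet_inter hac hlf hDB hdeg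
    fun C hCD hC hCconn => hbare C hC hCconn fun v hv =>
      ⟨hB (hDB (hCD hv)), (Finset.mem_filter.1 (hCD hv)).2.1⟩
  rw [hBD, sum_ncard_neighborSet_inter_comm] at hDS
  have hSD : ∑ w ∈ S, (G.neighborSet w ∩ ↑D).ncard ≤ ∑ w ∈ S, (G.neighborSet w ∩ ↑B).ncard :=
    Finset.sum_le_sum fun w _ => Set.ncard_le_ncard (Set.inter_subset_inter_right _ hDB)
      (B.finite_toSet.subset Set.inter_subset_right)
  have hB2 : 2 * D.card + ∑ w ∈ S, (G.neighborSet w ∩ ↑B).ncard = 2 * (B.card - 1) := by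
    have hsplit : ∑ v ∈ D, (G.neighborSet v ∩ ↑B).ncard + ∑ w ∈ S, (G.neighborSet w ∩ ↑B).ncard =
        ∑ v ∈ B, (G.neighborSet v ∩ ↑B).ncard := Finset.sum_filter_add_sum_filter_not _ _ _
    rwa [Finset.sum_congr rfl hdeg, Finset.sum_const, smul_eq_mul, mul_comm,
      sum_ncard_neighborSet_inter_eq hac hBne hBconn] at hsplit
  have hcard : D.card + S.card = B.card := Finset.card_filter_add_card_filter_not _
  have hS : ∑ w ∈ S, (G.neighborSet w ∩ ↑B).ncard ≤ 2 * S.card := by omega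
  have := Nat.mul_le_mul_left L (hSD.trans hS)
  linarith

lemma card_le_mul_sum_ncard_neighborSet_inter_sdiff (hac : G.IsAcyclic)
    (hlf : ∀ v : V, (G.neighborSet v).Finite) (hB : ↑B ⊆ R) (hBne : B.Nonempty)
    (hBconn : ConnectedIn G ↑B) {o : V} (hR2 : ∀ v ∈ R, v ≠ o → 2 ≤ degIn G R v)
    (hRo : o ∈ R → 1 ≤ degIn G R o) {L : ℕ}
    (hbare : ∀ C : Finset V, C.Nonempty → ConnectedIn G ↑C →
      (∀ v ∈ C, v ∈ R ∧ degIn G R v = 2) → C.card ≤ L) :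
    B.card ≤ 2 * (L + 1) * ∑ v ∈ B, (G.neighborSet v ∩ (R \ ↑B)).ncard := by
  have hD := card_filter_isBare_le hac hlf hB hBne hBconn hbare
  have hS := card_filter_not_isBare_le hac hlf hB hBne hBconn hR2 hRo
  have hcard := Finset.card_filter_add_card_filter_not (s := B) (p := IsBare G R B)
  have := Nat.mul_le_mul_left (L + 1) hS
  nlinarith

end Counting

section Expansion

variable {G : SimpleGraph V} {o : V} {L : ℕ}

lemma card_le_of_condC1_of_condC2 [Infinite V] (hT : G.IsTree)
    (hlf : ∀ v : V, (G.neighborSet v).Finite) (hC1 : CondC1 G o L) (hC2 : CondC2 G o L)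
    {K : Finset V} (hK : K.Nonempty) (hKconn : ConnectedIn G ↑K) :
    K.card ≤ 2 * L * (L + 1) * (edgeBdry G ↑K).ncard := by
  classical
  have hβ := one_le_ncard_edgeBdry hT.connected hlf hK
  obtain hB | ⟨b, hb⟩ := (K.filter (· ∈ Backbone G o)).eq_empty_or_nonempty
  · have hKL := card_le_of_forall_not_mem_backbone hT.connected hlf hC1 hKconn
      fun x hx hxB => Finset.notMem_empty x (hB ▸ Finset.mem_filter.2 ⟨hx, hxB⟩)
    calc K.card ≤ L * (1 * 1) := by omega
      _ ≤ L * (2 * (L + 1) * (edgeBdry G ↑K).ncard) :=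
          Nat.mul_le_mul_left _ (Nat.mul_le_mul (by omega) hβ)
      _ = 2 * L * (L + 1) * (edgeBdry G ↑K).ncard := by ring
  obtain ⟨hbK, hbB⟩ := Finset.mem_filter.1 hb
  have hKB := card_le_mul_card_filter_mem_backbone hT.connected hlf hC1 hKconn hbK hbB
  have hBout := card_le_mul_sum_ncard_neighborSet_inter_sdiff hT.isAcyclic hlf
    (fun x hx => (Finset.mem_filter.1 hx).2) ⟨b, hb⟩
    (hT.isAcyclic.connectedIn_filter_mem_backbone hKconn)
    (fun v hv hvo => two_le_degIn_backbone hlf hv hvo) (one_le_degIn_backbone_root hlf)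
    (fun C hC hCconn hdeg => card_le_of_condC2 hC2 hC hCconn hdeg)
  have hout : ∑ v ∈ K.filter (· ∈ Backbone G o),
      (G.neighborSet v ∩ (Backbone G o \ ↑(K.filter (· ∈ Backbone G o)))).ncard ≤
        (edgeBdry G ↑K).ncard := by
    rw [ncard_edgeBdry hlf]
    refine (Finset.sum_le_sum fun v _ => Set.ncard_le_ncard ?_ (hlf v).sdiff).trans
      (Finset.sum_le_sum_of_subset (Finset.filter_subset _ K))
    rintro x ⟨hvx, hxB, hxK⟩
    exact ⟨hvx, fun hx => hxK (by simpa using ⟨hx, hxB⟩)⟩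
  calc K.card ≤ L * (2 * (L + 1) * (edgeBdry G ↑K).ncard) :=
        hKB.trans (Nat.mul_le_mul_left _ (hBout.trans (Nat.mul_le_mul_left _ hout)))
    _ = 2 * L * (L + 1) * (edgeBdry G ↑K).ncard := by ring

lemma degSumF_le_of_condC1_of_condC2 [Infinite V] (hT : G.IsTree) (hL : 1 ≤ L)
    (hlf : ∀ v : V, (G.neighborSet v).Finite) (hC1 : CondC1 G o L) (hC2 : CondC2 G o L)
    {K : Finset V} (hK : K.Nonempty) (hKconn : ConnectedIn G ↑K) :
    degSumF G K ≤ 9 * L ^ 2 * (edgeBdry G ↑K).ncard := by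
  have hsum := degSumF_add_two hT.isAcyclic hlf hK hKconn
  have hcard := card_le_of_condC1_of_condC2 hT hlf hC1 hC2 hK hKconn
  have hL' : 4 * L + 1 ≤ 5 * L ^ 2 := by nlinarith
  nlinarith [Nat.zero_le (edgeBdry G ↑K).ncard]

lemma degSumF_pos [Infinite V] (hT : G.IsTree) (hlf : ∀ v : V, (G.neighborSet v).Finite)
    {K : Finset V} (hK : K.Nonempty) (hKconn : ConnectedIn G ↑K) : 0 < degSumF G K := by
  have := degSumF_add_two hT.isAcyclic hlf hK hKconn
  have := one_le_ncard_edgeBdry hT.connected hlf hK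
  have := hK.card_pos
  omega

lemma one_div_le_expConst [Nonempty V] {c : ℝ} (hc : 0 < c)
    (h : ∀ K : Finset V, K.Nonempty → ConnectedIn G ↑K →
      0 < degSumF G K ∧ (degSumF G K : ℝ) ≤ c * (edgeBdry G ↑K).ncard) :
    1 / c ≤ expConst G := by
  obtain ⟨v⟩ := ‹Nonempty V›
  refine le_csInf ⟨_, {v}, Finset.singleton_nonempty v, ?_, rfl⟩ ?_
  · intro a ha b hb
    simp only [Finset.coe_singleton, Set.mem_singleton_iff] at ha hb
    subst ha hb
    exact .refl
  · rintro x ⟨K, hK, hKconn, rfl⟩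
    obtain ⟨hpos, hle⟩ := h K hK hKconn
    rw [div_le_div_iff₀ hc (by exact_mod_cast hpos), one_mul, mul_comm]
    exact hle

end Expansion

/-- If an infinite locally finite tree satisfies (C1) and (C2) with
constant `L ≥ 1`, then `9 L² |∂K| ≥ |K|_D` for every finite nonempty connected `K`;
equivalently the edge-expansion constant is at least `1/(9 L²)`. -/
theorem statement4 {V : Type*} (G : SimpleGraph V) (o : V) (L : ℕ) (hL : 1 ≤ L)
    (hT : G.IsTree) (hinf : Infinite V)
    (hlf : ∀ v : V, (G.neighborSet v).Finite)
    (hC1 : CondC1 G o L) (hC2 : CondC2 G o L) :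
    (∀ K : Finset V, K.Nonempty → ConnectedIn G ↑K →
      degSumF G K ≤ 9 * L ^ 2 * (edgeBdry G ↑K).ncard) ∧
    1 / (9 * (L : ℝ) ^ 2) ≤ expConst G := by
  have hbound : ∀ K : Finset V, K.Nonempty → ConnectedIn G ↑K →
      degSumF G K ≤ 9 * L ^ 2 * (edgeBdry G ↑K).ncard := fun K hK hKconn =>
    degSumF_le_of_condC1_of_condC2 hT hL hlf hC1 hC2 hK hKconn
  have : Nonempty V := ⟨o⟩
  refine ⟨hbound, one_div_le_expConst (by positivity) fun K hK hKconn =>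
    ⟨degSumF_pos hT hlf hK hKconn, ?_⟩⟩
  exact_mod_cast hbound K hK hKconn
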